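/- Let L be a completely integrally closed principally generated C-lattice lattice domain. Then L is divisorial if and only if L is a Dedekind lattice, i.e., every element of L is principal. -/

import Mathlib

/-- A multiplicative lattice: a complete lattice (bottom `⊥` playing the role of `0`)
which is a commutative monoid whose identity `1` is the top element, and in which
multiplication distributes over arbitrary joins. -/
class MulLattice (L : Type*) extends CompleteLattice L, CommMonoid L where
  one_eq_top : (1 : L) = ⊤
  mul_sSup : ∀ (a : L) (S : Set L), a * sSup S = ⨆ b ∈ S, a * b

namespace MulLattice

variable {L : Type*} [MulLattice L]

/-- The residual `(y : x) = ⋁ {a | a * x ≤ y}`. -/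
def res (y x : L) : L := sSup {a : L | a * x ≤ y}

/-- `x` is meet-principal: `y ⊓ z * x = ((y : x) ⊓ z) * x` for all `y, z`. -/
def IsMeetPrincipal (x : L) : Prop := ∀ y z : L, y ⊓ z * x = (res y x ⊓ z) * x

/-- `x` is join-principal: `y ⊔ (z : x) = ((y * x ⊔ z) : x)` for all `y, z`. -/
def IsJoinPrincipal (x : L) : Prop := ∀ y z : L, y ⊔ res z x = res (y * x ⊔ z) x

/-- `x` is principal if it is both meet-principal and join-principal. -/
def IsPrincipal (x : L) : Prop := IsMeetPrincipal x ∧ IsJoinPrincipal x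

/-- A prime element: a proper element `p` with `x * y ≤ p → x ≤ p ∨ y ≤ p`. -/
def IsPrime (p : L) : Prop := p ≠ 1 ∧ ∀ x y : L, x * y ≤ p → x ≤ p ∨ y ≤ p

/-- A maximal element: an element maximal in `L - {1}`. -/
def IsMaximal (m : L) : Prop := m ≠ 1 ∧ ∀ b : L, m < b → b = 1

end MulLattice

/-- A principally generated C-lattice: a multiplicative lattice in which `1` is compact,
compact elements are closed under multiplication, every element is a join of compact
elements and every element is a join of principal elements. -/
class PGCLattice (L : Type*) extends MulLattice L where
  top_isCompact : IsCompactElement (⊤ : L)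
  compact_mul : ∀ a b : L, IsCompactElement a →
    IsCompactElement b → IsCompactElement (a * b)
  compactly_generated : ∀ a : L,
    a = sSup {c : L | IsCompactElement c ∧ c ≤ a}
  principally_generated : ∀ a : L,
    a = sSup {x : L | MulLattice.IsPrincipal x ∧ x ≤ a}

namespace MulLattice

variable {L : Type*}

/-- A lattice domain: `0 = ⊥` is a prime element. -/
def IsLatticeDomain (L : Type*) [MulLattice L] : Prop := IsPrime (⊥ : L)

variable [PGCLattice L]

open Classical in
/-- The divisorial (`v`-)closure of `a`: equals `(x : (x : a))` for a nonzero principal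
`x ≤ a` when such an `x` exists (in a lattice domain this is independent of the choice
of `x`), and `⊥` otherwise (in particular `vclos ⊥ = ⊥`). -/
noncomputable def vclos (a : L) : L :=
  if h : ∃ x : L, IsPrincipal x ∧ x ≠ ⊥ ∧ x ≤ a then
    res h.choose (res h.choose a)
  else ⊥

/-- `a` is divisorial if `a = a_v`. -/
def IsDivisorial (a : L) : Prop := vclos a = a

/-- `L` is h-local: every nonzero prime is below a unique maximal element and
every nonzero element is below only finitely many maximal elements. -/
def IsHLocal (L : Type*) [PGCLattice L] : Prop :=
  (∀ r : L, r ≠ ⊥ → IsPrime r → ∃! m : L, IsMaximal m ∧ r ≤ m) ∧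
  (∀ b : L, b ≠ ⊥ → {m : L | IsMaximal m ∧ b ≤ m}.Finite)

end MulLattice

open MulLattice

/-!
Given a nonzero principal `x ≤ a`, put `b = (x : a)`, so that `ab ≤ x`. Complete integral
closure forces `x ≤ (ab)_v`: if `y = tx ≤ ab` is nonzero principal and `e·ab ≤ y`, then
`eb ≤ tb`, hence `e ≤ (tb : b) = t` and `ex ≤ y`. So if `ab` is divisorial then `ab = x`, and a
factor of a nonzero principal element of a domain is principal. Conversely, if `a` is principal
then `(x : a)·a = x` and `(x : (x : a)) = (ab : b) = a`, again by complete integral closure.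
-/

namespace MulLattice

def IsCompletelyIntegrallyClosed (L : Type*) [MulLattice L] : Prop :=
  ∀ x c : L, IsPrincipal x → x ≠ ⊥ → c ≠ ⊥ → res (x * c) c = x

section Residuation

variable {L : Type*} [MulLattice L]

instance : IsQuantale L where
  mul_sSup_distrib := mul_sSup
  sSup_mul_distrib s y := by
    rw [mul_comm, mul_sSup]
    simp only [mul_comm y]

theorem le_res_iff {u y x : L} : u ≤ res y x ↔ u * x ≤ y :=
  Quantale.leftMulResiduation_le_iff_mul_le

theorem res_mul_le (y x : L) : res y x * x ≤ y :=
  le_res_iff.1 le_rfl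

theorem mul_res_le (x a : L) : a * res x a ≤ x := by
  rw [mul_comm]
  exact res_mul_le x a

theorem mul_le_self (a b : L) : a * b ≤ a :=
  mul_le_of_le_one_right' (le_top.trans_eq one_eq_top.symm)

theorem le_res_self (x a : L) : x ≤ res x a :=
  le_res_iff.2 (mul_le_self x a)

theorem IsMeetPrincipal.res_mul_eq {x y : L} (hx : IsMeetPrincipal x) (h : y ≤ x) :
    res y x * x = y := by
  have h' := hx y ⊤
  rwa [inf_top_eq, ← one_eq_top, one_mul, inf_eq_left.2 h, eq_comm] at h'

theorem isPrincipal_bot : IsPrincipal (⊥ : L) := by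
  have res_bot : ∀ y : L, res y ⊥ = ⊤ := fun y => top_unique (le_res_iff.2 (by simp))
  exact ⟨fun y z => by simp, fun y z => by simp [res_bot]⟩

end Residuation

section LatticeDomain

variable {L : Type*} [MulLattice L]

theorem mul_ne_bot (hL : IsLatticeDomain L) {a b : L} (ha : a ≠ ⊥) (hb : b ≠ ⊥) :
    a * b ≠ ⊥ := fun h => by
  rcases hL.2 a b h.le with h' | h'
  exacts [ha (le_bot_iff.1 h'), hb (le_bot_iff.1 h')]

theorem res_bot_eq_bot (hL : IsLatticeDomain L) {x : L} (hx : x ≠ ⊥) : res ⊥ x = ⊥ := by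
  by_contra h
  exact mul_ne_bot hL h hx (le_bot_iff.1 (res_mul_le ⊥ x))

theorem IsPrincipal.le_of_mul_le_mul (hL : IsLatticeDomain L) {x u v : L} (hx : IsPrincipal x)
    (hx0 : x ≠ ⊥) (h : u * x ≤ v * x) : u ≤ v := by
  have hcancel := hx.2 v ⊥
  rw [res_bot_eq_bot hL hx0, sup_bot_eq, sup_bot_eq] at hcancel
  exact hcancel ▸ le_res_iff.2 h

theorem res_eq_res_mul_of_mul_eq (hL : IsLatticeDomain L) {a b x : L} (h : a * b = x)
    (hx : IsPrincipal x) (hx0 : x ≠ ⊥) (y : L) : res y a = res (y * b) x := by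
  refine le_antisymm (le_res_iff.2 ?_) (le_res_iff.2 (hx.le_of_mul_le_mul hL hx0 ?_))
  · rw [← h, ← mul_assoc]
    exact mul_le_mul_left (res_mul_le y a) b
  · calc res (y * b) x * a * x = res (y * b) x * x * a := mul_right_comm _ _ _
      _ ≤ y * b * a := mul_le_mul_left (res_mul_le _ x) a
      _ = y * x := by rw [mul_assoc, mul_comm b, h]

theorem IsPrincipal.of_mul_eq (hL : IsLatticeDomain L) {a b x : L} (h : a * b = x)
    (hx : IsPrincipal x) (hx0 : x ≠ ⊥) : IsPrincipal a := by
  have hres := res_eq_res_mul_of_mul_eq hL h hx hx0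
  refine ⟨fun y z => le_antisymm (hx.le_of_mul_le_mul hL hx0 ?_) ?_, fun y z => ?_⟩
  · have hb : (y ⊓ z * a) * b ≤ (res y a ⊓ z) * x := by
      rw [hres, ← hx.1]
      refine le_inf (mul_le_mul_left inf_le_left b) ?_
      rw [← h, ← mul_assoc]
      exact mul_le_mul_left inf_le_right b
    calc (y ⊓ z * a) * x = (y ⊓ z * a) * b * a := by rw [mul_assoc, mul_comm b, h]
      _ ≤ (res y a ⊓ z) * x * a := mul_le_mul_left hb a
      _ = (res y a ⊓ z) * a * x := mul_right_comm _ _ _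
  · exact le_inf ((mul_le_mul_left inf_le_left a).trans (res_mul_le y a))
      (mul_le_mul_left inf_le_right a)
  · rw [hres, hres, Quantale.sup_mul_distrib, mul_assoc, h]
    exact hx.2 y (z * b)

/-- `u·a ≤ t·x` with `x ≤ a` forces `u ≤ t`, so `u = r·t` with `r·a ≤ x`. -/
theorem IsPrincipal.le_mul_res_of_mul_le (hL : IsLatticeDomain L) {t x a u : L}
    (ht : IsPrincipal t) (ht0 : t ≠ ⊥) (hx : IsPrincipal x) (hx0 : x ≠ ⊥) (hxa : x ≤ a)
    (hu : u * a ≤ t * x) : u ≤ t * res x a := by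
  have hut : u ≤ t := hx.le_of_mul_le_mul hL hx0 ((mul_le_mul_right hxa u).trans hu)
  have hr : res u t * t = u := ht.1.res_mul_eq hut
  have hra : res u t * a ≤ x := ht.le_of_mul_le_mul hL ht0 <| by
    rw [mul_right_comm, hr, mul_comm x]
    exact hu
  calc u = res u t * t := hr.symm
    _ ≤ res x a * t := mul_le_mul_left (le_res_iff.2 hra) t
    _ = t * res x a := mul_comm _ _

theorem le_res_res_mul_res (hL : IsLatticeDomain L) (hcic : IsCompletelyIntegrallyClosed L)
    {a x y : L} (hx : IsPrincipal x) (hx0 : x ≠ ⊥) (hxa : x ≤ a) (hy : IsPrincipal y)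
    (hy0 : y ≠ ⊥) (hya : y ≤ a * res x a) : x ≤ res y (res y (a * res x a)) := by
  set b := res x a
  set e := res y (a * b)
  set t := res y x
  have hty : t * x = y := hx.1.res_mul_eq (hya.trans (mul_res_le x a))
  have ht : IsPrincipal t := IsPrincipal.of_mul_eq hL hty hy hy0
  have ht0 : t ≠ ⊥ := fun h => hy0 (by rw [← hty, h, Quantale.bot_mul])
  have hb0 : b ≠ ⊥ := ne_bot_of_le_ne_bot hx0 (le_res_self x a)
  have heb : e * b ≤ t * b := ht.le_mul_res_of_mul_le hL ht0 hx hx0 hxa <| by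
    rw [mul_assoc, mul_comm b, hty]
    exact res_mul_le y _
  have het : e ≤ t := hcic t b ht ht0 hb0 ▸ le_res_iff.2 heb
  refine le_res_iff.2 ?_
  calc x * e ≤ x * t := mul_le_mul_right het x
    _ = y := by rw [mul_comm, hty]

end LatticeDomain

section DivisorialClosure

variable {L : Type*} [PGCLattice L]

theorem exists_isPrincipal_le {a : L} (ha : a ≠ ⊥) : ∃ x, IsPrincipal x ∧ x ≠ ⊥ ∧ x ≤ a := by
  by_contra! h
  refine ha (le_bot_iff.1 ?_)
  rw [PGCLattice.principally_generated a]
  exact sSup_le fun x ⟨hx, hxa⟩ => le_bot_iff.2 (by_contra fun hx0 => h x hx hx0 hxa)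

theorem vclos_bot : vclos (⊥ : L) = ⊥ :=
  dif_neg fun ⟨_, _, hx0, hx⟩ => hx0 (le_bot_iff.1 hx)

theorem exists_vclos_eq_res_res {a : L} (ha : a ≠ ⊥) :
    ∃ x, IsPrincipal x ∧ x ≠ ⊥ ∧ x ≤ a ∧ vclos a = res x (res x a) := by
  have h := exists_isPrincipal_le ha
  exact ⟨h.choose, h.choose_spec.1, h.choose_spec.2.1, h.choose_spec.2.2, dif_pos h⟩

theorem isDivisorial_of_isPrincipal (hcic : IsCompletelyIntegrallyClosed L) {a : L}
    (ha : IsPrincipal a) : IsDivisorial a := by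
  rcases eq_or_ne a ⊥ with rfl | ha0
  · exact vclos_bot
  obtain ⟨x, -, hx0, hxa, hv⟩ := exists_vclos_eq_res_res ha0
  have hb0 : res x a ≠ ⊥ := ne_bot_of_le_ne_bot hx0 (le_res_self x a)
  have hres := hcic a _ ha ha0 hb0
  rwa [mul_comm, ha.1.res_mul_eq hxa, ← hv] at hres

theorem IsPrincipal.of_isDivisorial_mul_res (hL : IsLatticeDomain L)
    (hcic : IsCompletelyIntegrallyClosed L) {a x : L} (hx : IsPrincipal x) (hx0 : x ≠ ⊥)
    (hxa : x ≤ a) (hdiv : IsDivisorial (a * res x a)) : IsPrincipal a := by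
  have hab0 : a * res x a ≠ ⊥ :=
    mul_ne_bot hL (ne_bot_of_le_ne_bot hx0 hxa) (ne_bot_of_le_ne_bot hx0 (le_res_self x a))
  obtain ⟨y, hy, hy0, hya, hv⟩ := exists_vclos_eq_res_res hab0
  have hxab : x ≤ a * res x a := calc
    x ≤ res y (res y (a * res x a)) := le_res_res_mul_res hL hcic hx hx0 hxa hy hy0 hya
    _ = a * res x a := hv ▸ hdiv
  exact IsPrincipal.of_mul_eq hL ((mul_res_le x a).antisymm hxab) hx hx0

end DivisorialClosure

end MulLattice

theorem stmt17 {L : Type*} [PGCLattice L] (hL : IsLatticeDomain L)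
    (hcic : ∀ x c : L, IsPrincipal x → x ≠ ⊥ → c ≠ ⊥ → res (x * c) c = x) :
    (∀ a : L, IsDivisorial a) ↔ (∀ a : L, IsPrincipal a) := by
  refine ⟨fun hdiv a => ?_, fun hp a => isDivisorial_of_isPrincipal hcic (hp a)⟩
  rcases eq_or_ne a ⊥ with rfl | ha
  · exact isPrincipal_bot
  obtain ⟨x, hx, hx0, hxa⟩ := exists_isPrincipal_le ha
  exact hx.of_isDivisorial_mul_res hL hcic hx0 hxa (hdiv _)
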